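/- Let a > 0, let c be a real number with c > −a/2, and let z ∈ ℂ. Then the Bargmann transform of the Gaussian x ↦ e^{−c x²} satisfies [B_{a/2}( e^{−c x²} )](z) = (a/π)^{1/4} · √( π/(c + a/2) ) · e^{(a/4)·z²·(a − 2c)/(a + 2c)}. -/
import Mathlib

open Complex Real

/-- The (parametrized) Bargmann transform `B_{a/2}`:
`(B_{a/2}f)(z) = (a/π)^{1/4} ∫_ℝ f(x) e^{axz − (a/2)x² − (a/4)z²} dx`. -/
noncomputable def bargmann (a : ℝ) (f : ℝ → ℂ) (z : ℂ) : ℂ :=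
  ((a / Real.pi) ^ ((1 : ℝ) / 4) : ℝ) *
    ∫ x : ℝ, f x * Complex.exp (a * x * z - (a / 2) * x ^ 2 - (a / 4) * z ^ 2)

/-- Bargmann transform of a centred Gaussian:
`[B_{a/2}(e^{−cx²})](z) = (a/π)^{1/4} √(π/(c+a/2)) e^{(a/4)z²(a−2c)/(a+2c)}`
for `a > 0`, `c > −a/2`. -/
theorem bargmann_gaussian (a c : ℝ) (ha : 0 < a) (hc : -(a / 2) < c) (z : ℂ) :
    bargmann a (fun x : ℝ => Complex.exp (-(c * x ^ 2))) z =
      ((a / Real.pi) ^ ((1 : ℝ) / 4) : ℝ) * (Real.sqrt (Real.pi / (c + a / 2)) : ℂ) *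
        Complex.exp ((a / 4) * z ^ 2 * ((a - 2 * c) / (a + 2 * c))) := by
  have hpos : 0 < c + a / 2 := by linarith
  set b : ℂ := -((c : ℂ) + a / 2) with hb
  have hbre : b.re < 0 := by
    simp [hb]
    push_cast
    linarith
  have key := integral_cexp_quadratic hbre ((a : ℂ) * z) (-(a / 4) * z ^ 2)
  unfold bargmann
  have hrw : ∀ x : ℝ, Complex.exp (-(c * (x : ℂ) ^ 2)) *
      Complex.exp ((a : ℂ) * x * z - (a / 2) * x ^ 2 - (a / 4) * z ^ 2) =
      Complex.exp (b * x ^ 2 + ((a : ℂ) * z) * x + (-(a / 4) * z ^ 2)) := by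
    intro x
    rw [← Complex.exp_add]
    congr 1
    simp only [hb]
    ring
  simp_rw [hrw, key]
  rw [mul_assoc]
  congr 1
  have hnb : -b = ((c + a / 2 : ℝ) : ℂ) := by push_cast [hb]; ring
  have hcpow : ((Real.pi / (c + a / 2) : ℝ) : ℂ) ^ ((1 : ℂ) / 2) =
      (Real.sqrt (Real.pi / (c + a / 2)) : ℂ) := by
    rw [Real.sqrt_eq_rpow, Complex.ofReal_cpow (by positivity) (1 / 2)]
    push_cast
    ring_nf
  congr 1
  · rw [hnb, ← hcpow]
    push_cast
    ring_nf
  · congr 1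
    have hne : ((c : ℂ) + a / 2) ≠ 0 := by
      rw [show ((c : ℂ) + a / 2) = ((c + a / 2 : ℝ) : ℂ) by push_cast; ring]
      exact_mod_cast (ne_of_gt hpos)
    have hne2 : ((a : ℂ) + 2 * c) ≠ 0 := by
      intro h
      apply hne
      have : ((a : ℂ) + 2 * c) = 2 * ((c : ℂ) + a / 2) := by ring
      rw [this] at h
      simpa using h
    have hne3 : (-((a : ℂ) * 4) - (c : ℂ) * 8) ≠ 0 := by
      intro h
      apply hne2
      have : ((a : ℂ) + 2 * c) = (-(1:ℂ)/4) * (-((a : ℂ) * 4) - (c : ℂ) * 8) := by ring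
      rw [this, h, mul_zero]
    have h4b : (4 : ℂ) * b = (-2 : ℂ) * ((a : ℂ) + 2 * c) := by rw [hb]; ring
    rw [h4b]
    field_simp [hne2]
    ring
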